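/- Define g : [0,∞) → ℝ by g(x) = (x+1)·ln(x+1) − x·ln x for x > 0 and g(0) = 0, and f : [1,∞) → ℝ by f(x) = ((x+1)/2)·ln((x+1)/2) − ((x−1)/2)·ln((x−1)/2) for x > 1 and f(1) = 0. Then for every natural number K ≥ 1, as E → 0⁺, K·g(E) − f(1 + 2·K·E) = K·(ln K)·E + O(E²); that is, the function E ↦ K·g(E) − f(1+2K·E) − K·(ln K)·E is O(E²) with respect to the filter of punctured right-neighborhoods of 0. -/

import Mathlib

open Filter Topology Asymptotics

/-- The Gordon function `g(x) = (x+1)·ln(x+1) − x·ln x` (with `g 0 = 0`, which holds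
automatically since `Real.log 0 = 0`). -/
noncomputable def gordon (x : ℝ) : ℝ := (x + 1) * Real.log (x + 1) - x * Real.log x

/-- The Gaussian-state entropy function
`f(x) = ((x+1)/2)·ln((x+1)/2) − ((x−1)/2)·ln((x−1)/2)` (with `f 1 = 0`, which holds
automatically since `Real.log 0 = 0`). -/
noncomputable def entF (x : ℝ) : ℝ :=
  (x + 1) / 2 * Real.log ((x + 1) / 2) - (x - 1) / 2 * Real.log ((x - 1) / 2)


/-!
Writing `φ t = (1 + t) * log (1 + t)`, one has `f (1 + 2x) = φ x - x log x`, and the entropy terms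
`x log x` cancel exactly against `K · g(E)` once `KE log (KE)` is split as `KE log K + KE log E`.
What remains is `K (φ E - E) - (φ (KE) - KE)`, and `0 ≤ φ t - t ≤ t²` near `0` follows from
`t / (1 + t) ≤ log (1 + t) ≤ t`.
-/

namespace Real

lemma one_add_mul_log_one_add_sub_mem_Icc {t : ℝ} (ht : -1 < t) :
    (1 + t) * log (1 + t) - t ∈ Set.Icc 0 (t ^ 2) := by
  have hpos : 0 < 1 + t := by linarith
  have hlower := one_sub_inv_le_log_of_pos hpos
  have hupper := log_le_sub_one_of_pos hpos
  have hinv : (1 + t) * (1 - (1 + t)⁻¹) = t := by rw [mul_sub, mul_inv_cancel₀ hpos.ne']; ring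
  constructor
  · nlinarith [mul_le_mul_of_nonneg_left hlower hpos.le]
  · nlinarith [mul_le_mul_of_nonneg_left hupper hpos.le]

lemma isBigO_one_add_mul_log_one_add_sub :
    (fun t : ℝ => (1 + t) * log (1 + t) - t) =O[𝓝 0] fun t => t ^ 2 := by
  refine IsBigO.of_bound 1 ?_
  filter_upwards [Ioi_mem_nhds (show (-1 : ℝ) < 0 by norm_num)] with t ht
  obtain ⟨hnonneg, hle⟩ := one_add_mul_log_one_add_sub_mem_Icc ht
  rw [norm_of_nonneg hnonneg, norm_of_nonneg (sq_nonneg t), one_mul]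
  exact hle

end Real

open Real

lemma entF_one_add_two_mul (x : ℝ) :
    entF (1 + 2 * x) = (1 + x) * log (1 + x) - x * log x := by
  rw [entF, show (1 + 2 * x + 1) / 2 = 1 + x by ring, show (1 + 2 * x - 1) / 2 = x by ring]

lemma mul_gordon_sub_entF_eq (K E : ℝ) :
    K * gordon E - entF (1 + 2 * K * E) - K * log K * E =
      K * ((1 + E) * log (1 + E) - E) - ((1 + K * E) * log (1 + K * E) - K * E) := by
  have hsplit : K * E * log (K * E) = E * (K * log K) + K * (E * log E) := by
    have h := negMulLog_mul K E
    simp only [negMulLog] at h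
    linarith
  rw [mul_assoc 2, entF_one_add_two_mul, gordon, add_comm E 1, hsplit]
  ring

theorem quantum_exponent_expansion_general (K : ℕ) :
    (fun E : ℝ =>
        (K : ℝ) * gordon E - entF (1 + 2 * (K : ℝ) * E) -
          (K : ℝ) * Real.log (K : ℝ) * E) =O[𝓝[>] (0 : ℝ)]
      fun E : ℝ => E ^ 2 := by
  simp only [mul_gordon_sub_entF_eq]
  have hE := isBigO_one_add_mul_log_one_add_sub.const_mul_left (K : ℝ)
  have hKE : (fun E : ℝ => (1 + K * E) * log (1 + K * E) - K * E) =O[𝓝 0] fun E => E ^ 2 := by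
    have hlim : Tendsto (fun E : ℝ => (K : ℝ) * E) (𝓝 0) (𝓝 0) := by
      simpa using (continuous_const_mul (K : ℝ)).tendsto 0
    refine (isBigO_one_add_mul_log_one_add_sub.comp_tendsto hlim).trans ?_
    simpa [Function.comp_def, mul_pow] using isBigO_const_mul_self ((K : ℝ) ^ 2) (· ^ 2) (𝓝 0)
  exact (hE.sub hKE).mono nhdsWithin_le_nhds

/-- Low-energy expansion of the quantum error exponent lower bound:
`K·g(E) − f(1+2KE) = K·(ln K)·E + O(E²)` as `E → 0⁺`. -/
theorem quantum_exponent_expansion (K : ℕ) (hK : 1 ≤ K) :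
    (fun E : ℝ =>
        (K : ℝ) * gordon E - entF (1 + 2 * (K : ℝ) * E) -
          (K : ℝ) * Real.log (K : ℝ) * E) =O[𝓝[>] (0 : ℝ)]
      fun E : ℝ => E ^ 2 :=
  quantum_exponent_expansion_general K
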